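/- arXiv:math/0302325 — 4 statements merged into one kernel-verified Lean document; each statement's English description precedes it below -/
import Mathlib

section
/- Let N ⊆ M be a Frobenius extension of rings with Frobenius homomorphism ψ : M → N and quasibasis Σᵢ uᵢ ⊗ vᵢ ∈ M ⊗_N M (so Σᵢ ψ(m uᵢ)·vᵢ = m = Σᵢ uᵢ·ψ(vᵢ m) for all m ∈ M). Define S_A : End(_N M_N) → End(_N M_N) by S_A(α)(m') = Σᵢ uᵢ ψ(α(vᵢ) m'). Then S_A is a ring anti-automorphism, with inverse S_A⁻¹(α)(m') = Σᵢ ψ(m' α(uᵢ)) vᵢ. -/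
open scoped TensorProduct

namespace Frob

variable {N M : Type*} [Ring N] [Ring M]

/-- A Frobenius system for a ring extension `ι : N →+* M`:
an `N`-`N`-bimodule map `ψ : M → N` together with a quasibasis `∑ i, u i ⊗ v i`. -/
structure FrobeniusData (ι : N →+* M) where
  ψ : M →+ N
  ψ_left : ∀ (n : N) (m : M), ψ (ι n * m) = n * ψ m
  ψ_right : ∀ (m : M) (n : N), ψ (m * ι n) = ψ m * n
  k : ℕ
  u : Fin k → M
  v : Fin k → M
  quasi_left : ∀ m : M, ∑ i, ι (ψ (m * u i)) * v i = m
  quasi_right : ∀ m : M, ∑ i, u i * ι (ψ (v i * m)) = m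

/-- `N`-`N`-bimodule endomorphism of `M`. -/
def IsBimodEnd (ι : N →+* M) (α : M →+ M) : Prop :=
  (∀ n m, α (ι n * m) = ι n * α m) ∧ (∀ m n, α (m * ι n) = α m * ι n)

variable {ι : N →+* M}

/-- The antipode `S_A(α)(m') = ∑ i, u i * ι (ψ (α (v i) * m'))`. -/
noncomputable def SA (D : FrobeniusData ι) (α : M →+ M) : M →+ M :=
  AddMonoidHom.mk' (fun m' => ∑ i, D.u i * ι (D.ψ (α (D.v i) * m')))
    (by intro x y; simp [mul_add, map_add, Finset.sum_add_distrib])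

/-- The inverse antipode `S_A⁻¹(α)(m') = ∑ i, ι (ψ (m' * α (u i))) * v i`. -/
noncomputable def SAinv (D : FrobeniusData ι) (α : M →+ M) : M →+ M :=
  AddMonoidHom.mk' (fun m' => ∑ i, ι (D.ψ (m' * α (D.u i))) * D.v i)
    (by intro x y; simp [add_mul, map_add, Finset.sum_add_distrib])

/-- The subgroup of `M ⊗[ℤ] M` by which one quotients to obtain `M ⊗_N M`. -/
def relN (ι : N →+* M) : Submodule ℤ (M ⊗[ℤ] M) :=
  Submodule.span ℤ
    {x | ∃ (n : N) (a b : M), x = (a * ι n) ⊗ₜ[ℤ] b - a ⊗ₜ[ℤ] (ι n * b)}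

/-- The subgroup of `M ⊗[ℤ] M ⊗[ℤ] M` by which one quotients to obtain `M ⊗_N M ⊗_N M`. -/
def relN3 (ι : N →+* M) : Submodule ℤ (M ⊗[ℤ] (M ⊗[ℤ] M)) :=
  Submodule.span ℤ
    ({x | ∃ (n : N) (a b c : M),
        x = (a * ι n) ⊗ₜ[ℤ] (b ⊗ₜ[ℤ] c) - a ⊗ₜ[ℤ] ((ι n * b) ⊗ₜ[ℤ] c)} ∪
     {x | ∃ (n : N) (a b c : M),
        x = a ⊗ₜ[ℤ] ((b * ι n) ⊗ₜ[ℤ] c) - a ⊗ₜ[ℤ] (b ⊗ₜ[ℤ] (ι n * c))})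

/-- The Nakayama map `ν(c) = ∑ i, ψ(u i * c) * v i` on the centralizer. -/
noncomputable def nakayama (D : FrobeniusData ι) (c : M) : M :=
  ∑ i, ι (D.ψ (D.u i * c)) * D.v i

/-- The centralizer `C_M(N)`. -/
def centralizer (ι : N →+* M) : Set M := {c : M | ∀ n : N, c * ι n = ι n * c}

/-- The Fourier transform `F(α) = ∑ i, u i ⊗ α (v i)` (a representative in `M ⊗[ℤ] M`). -/
noncomputable def Ftr (D : FrobeniusData ι) (α : M →+ M) : M ⊗[ℤ] M :=
  ∑ i, D.u i ⊗ₜ[ℤ] α (D.v i)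

/-- The inverse Fourier transform evaluated on a representative:
`F⁻¹(b¹ ⊗ b²)(m) = ψ(m * b¹) * b²`. -/
noncomputable def FinvEval (D : FrobeniusData ι) (x : M ⊗[ℤ] M) (m : M) : M :=
  LinearMap.mul' ℤ M
    ((LinearMap.rTensor M
      ((ι.toAddMonoidHom.comp (D.ψ.comp (AddMonoidHom.mulLeft m))).toIntLinearMap)) x)

end Frob

section Aux

namespace Frob

variable {N M : Type*} [Ring N] [Ring M] {ι : N →+* M}

lemma SA_apply (D : FrobeniusData ι) (α : M →+ M) (m' : M) :
    SA D α m' = ∑ i, D.u i * ι (D.ψ (α (D.v i) * m')) := rfl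

lemma SAinv_apply (D : FrobeniusData ι) (α : M →+ M) (m' : M) :
    SAinv D α m' = ∑ i, ι (D.ψ (m' * α (D.u i))) * D.v i := rfl

/-- The workhorse: pairing the quasibasis against `ψ` reconstructs `α w`. -/
lemma sum_psi_mul (D : FrobeniusData ι) {α : M →+ M} (hα : IsBimodEnd ι α) (w m : M) :
    ∑ i, ι (D.ψ (w * D.u i)) * ι (D.ψ (α (D.v i) * m)) = ι (D.ψ (α w * m)) := by
  have key : ∀ i : Fin D.k, ι (D.ψ (w * D.u i)) * ι (D.ψ (α (D.v i) * m))
      = ι (D.ψ (α (ι (D.ψ (w * D.u i)) * D.v i) * m)) := by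
    intro i
    rw [← map_mul, ← D.ψ_left, ← mul_assoc, ← hα.1]
  rw [Finset.sum_congr rfl fun i _ => key i, ← map_sum, ← map_sum, ← Finset.sum_mul,
    ← map_sum, D.quasi_left w]

lemma sum_alpha_left (D : FrobeniusData ι) {α : M →+ M} (hα : IsBimodEnd ι α) (w : M) :
    ∑ i, ι (D.ψ (w * D.u i)) * α (D.v i) = α w := by
  have key : ∀ i : Fin D.k, ι (D.ψ (w * D.u i)) * α (D.v i)
      = α (ι (D.ψ (w * D.u i)) * D.v i) := fun i => (hα.1 _ _).symm
  rw [Finset.sum_congr rfl fun i _ => key i, ← map_sum, D.quasi_left w]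

lemma sum_alpha_right (D : FrobeniusData ι) {α : M →+ M} (hα : IsBimodEnd ι α) (w : M) :
    ∑ i, α (D.u i) * ι (D.ψ (D.v i * w)) = α w := by
  have key : ∀ i : Fin D.k, α (D.u i) * ι (D.ψ (D.v i * w))
      = α (D.u i * ι (D.ψ (D.v i * w))) := fun i => (hα.2 _ _).symm
  rw [Finset.sum_congr rfl fun i _ => key i, ← map_sum, D.quasi_right w]

/-- The commutation lemma: the quasibasis element commutes with `x` in `M ⊗_N M`. -/
lemma lemC (D : FrobeniusData ι) {α : M →+ M} (hα : IsBimodEnd ι α) (x m : M) :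
    ∑ i, x * (D.u i * ι (D.ψ (α (D.v i) * m))) =
    ∑ i, D.u i * ι (D.ψ (α (D.v i * x) * m)) := by
  have key : ∀ i : Fin D.k, x * (D.u i * ι (D.ψ (α (D.v i) * m)))
      = ∑ j, D.u j * (ι (D.ψ (D.v j * x * D.u i)) * ι (D.ψ (α (D.v i) * m))) := by
    intro i
    rw [← mul_assoc]
    conv_lhs => rw [← D.quasi_right (x * D.u i)]
    rw [Finset.sum_mul]
    exact Finset.sum_congr rfl fun j _ => by rw [mul_assoc, mul_assoc]
  rw [Finset.sum_congr rfl fun i _ => key i, Finset.sum_comm]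
  refine Finset.sum_congr rfl fun j _ => ?_
  rw [← Finset.mul_sum, sum_psi_mul D hα (D.v j * x) m]

end Frob

end Aux

/-- For a Frobenius extension `ι : N → M` with Frobenius homomorphism `ψ`
and quasibasis `∑ i, u i ⊗ v i`, the map `S_A(α)(m') = ∑ i, u i * ψ(α (v i) * m')` is a ring
anti-automorphism of `End(_N M _N)`, with inverse `S_A⁻¹(α)(m') = ∑ i, ψ(m' * α (u i)) * v i`. -/
theorem statement0 {N M : Type*} [Ring N] [Ring M] (ι : N →+* M)
    (D : Frob.FrobeniusData ι) :
    (∀ α, Frob.IsBimodEnd ι α → Frob.IsBimodEnd ι (Frob.SA D α)) ∧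
    (∀ α β : M →+ M, Frob.SA D (α + β) = Frob.SA D α + Frob.SA D β) ∧
    (∀ α β : M →+ M, Frob.IsBimodEnd ι α → Frob.IsBimodEnd ι β →
      Frob.SA D (α.comp β) = (Frob.SA D β).comp (Frob.SA D α)) ∧
    Frob.SA D (AddMonoidHom.id M) = AddMonoidHom.id M ∧
    (∀ α, Frob.IsBimodEnd ι α → Frob.SAinv D (Frob.SA D α) = α) ∧
    (∀ α, Frob.IsBimodEnd ι α → Frob.SA D (Frob.SAinv D α) = α) := by
  refine ⟨?_, ?_, ?_, ?_, ?_, ?_⟩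
  · -- SA preserves bimodule endomorphisms
    intro α hα
    constructor
    · intro n m
      rw [Frob.SA_apply, Frob.SA_apply, Finset.mul_sum, Frob.lemC D hα (ι n) m]
      refine Finset.sum_congr rfl fun i _ => ?_
      rw [hα.2, mul_assoc]
    · intro m n
      rw [Frob.SA_apply, Frob.SA_apply, Finset.sum_mul]
      refine Finset.sum_congr rfl fun i _ => ?_
      rw [← mul_assoc (α (D.v i)), D.ψ_right, map_mul, ← mul_assoc]
  · -- additivity
    intro α β
    ext m'
    simp [Frob.SA_apply, add_mul, mul_add, map_add, Finset.sum_add_distrib]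
  · -- anti-multiplicativity
    intro α β hα hβ
    ext m'
    rw [AddMonoidHom.comp_apply, Frob.SA_apply, Frob.SA_apply]
    refine Finset.sum_congr rfl fun i _ => ?_
    rw [AddMonoidHom.comp_apply, ← Frob.sum_psi_mul D hα (β (D.v i)) m', Finset.mul_sum,
      Frob.SA_apply, Finset.mul_sum, map_sum, map_sum, Finset.mul_sum]
    refine Finset.sum_congr rfl fun j _ => ?_
    rw [← mul_assoc (β (D.v i)), D.ψ_right, map_mul ι]
  · -- SA id = id
    ext m'
    rw [Frob.SA_apply]
    simpa using D.quasi_right m'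
  · -- SAinv ∘ SA = id
    intro α hα
    ext m'
    rw [Frob.SAinv_apply]
    have key : ∀ j : Fin D.k, ι (D.ψ (m' * Frob.SA D α (D.u j))) * D.v j
        = ∑ i, ι (D.ψ (m' * D.u i)) * (ι (D.ψ (α (D.v i) * D.u j)) * D.v j) := by
      intro j
      rw [Frob.SA_apply, Finset.mul_sum, map_sum, map_sum, Finset.sum_mul]
      refine Finset.sum_congr rfl fun i _ => ?_
      rw [← mul_assoc m', D.ψ_right, map_mul ι, mul_assoc]
    rw [Finset.sum_congr rfl fun j _ => key j, Finset.sum_comm]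
    have key2 : ∀ i : Fin D.k,
        ∑ j, ι (D.ψ (m' * D.u i)) * (ι (D.ψ (α (D.v i) * D.u j)) * D.v j)
        = ι (D.ψ (m' * D.u i)) * α (D.v i) := by
      intro i
      rw [← Finset.mul_sum, D.quasi_left (α (D.v i))]
    rw [Finset.sum_congr rfl fun i _ => key2 i, Frob.sum_alpha_left D hα m']
  · -- SA ∘ SAinv = id
    intro α hα
    ext m'
    rw [Frob.SA_apply]
    have key : ∀ i : Fin D.k, D.u i * ι (D.ψ (Frob.SAinv D α (D.v i) * m'))
        = ∑ j, D.u i * (ι (D.ψ (D.v i * α (D.u j))) * ι (D.ψ (D.v j * m'))) := by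
      intro i
      rw [Frob.SAinv_apply, Finset.sum_mul, map_sum, map_sum, Finset.mul_sum]
      refine Finset.sum_congr rfl fun j _ => ?_
      rw [mul_assoc, D.ψ_left, map_mul ι]
    rw [Finset.sum_congr rfl fun i _ => key i, Finset.sum_comm]
    have key2 : ∀ j : Fin D.k,
        ∑ i, D.u i * (ι (D.ψ (D.v i * α (D.u j))) * ι (D.ψ (D.v j * m')))
        = α (D.u j) * ι (D.ψ (D.v j * m')) := by
      intro j
      rw [Finset.sum_congr rfl fun i _ => (mul_assoc _ _ _).symm, ← Finset.sum_mul,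
        D.quasi_right (α (D.u j))]
    rw [Finset.sum_congr rfl fun j _ => key2 j, Frob.sum_alpha_right D hα m']
end

section
/- Let N ⊆ M be a Frobenius extension with Frobenius homomorphism ψ and quasibasis Σᵢ uᵢ ⊗ vᵢ, and let A = End(_N M_N) with S_A(α)(m') = Σᵢ uᵢ ψ(α(vᵢ) m'). Then for all m, m' ∈ M and α ∈ A, one has ψ(m · S_A(α)(m')) = ψ(α(m) · m'); that is, S_A is the transpose of α with respect to the bilinear form (m, m') ↦ ψ(m m'). -/
open scoped TensorProduct

/-- `S_A` is the transpose with respect to the bilinear form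
`(m, m') ↦ ψ(m m')`: for every `N`-`N`-bimodule endomorphism `α` of `M`,
`ψ(m * S_A(α)(m')) = ψ(α(m) * m')`. -/
theorem statement1 {N M : Type*} [Ring N] [Ring M] (ι : N →+* M)
    (D : Frob.FrobeniusData ι) (α : M →+ M) (hα : Frob.IsBimodEnd ι α) (m m' : M) :
    D.ψ (m * Frob.SA D α m') = D.ψ (α m * m') := by
  have key : ∀ i, D.ψ (m * (D.u i * ι (D.ψ (α (D.v i) * m'))))
      = D.ψ (α (ι (D.ψ (m * D.u i)) * D.v i) * m') := by
    intro i
    rw [← mul_assoc, D.ψ_right, hα.1, mul_assoc, D.ψ_left]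
  calc D.ψ (m * Frob.SA D α m')
      = ∑ i, D.ψ (m * (D.u i * ι (D.ψ (α (D.v i) * m')))) := by
        simp [Frob.SA, AddMonoidHom.mk'_apply, Finset.mul_sum, map_sum]
    _ = ∑ i, D.ψ (α (ι (D.ψ (m * D.u i)) * D.v i) * m') := by
        exact Finset.sum_congr rfl fun i _ => key i
    _ = D.ψ (α m * m') := by
        rw [← map_sum, ← Finset.sum_mul, ← map_sum, D.quasi_left]
end

section
/- Let N ⊆ M be a Frobenius extension with Frobenius homomorphism ψ and quasibasis Σᵢ uᵢ ⊗ vᵢ. Define the Nakayama map ν : C_M(N) → C_M(N) on the centralizer by ν(c) = Σᵢ ψ(uᵢ c) vᵢ. Then ν is a ring automorphism of C_M(N), and for all m ∈ M and c ∈ C_M(N): ψ(m c) = ψ(ν(c) m), and Σᵢ uᵢ c ⊗ vᵢ = Σᵢ uᵢ ⊗ ν(c) vᵢ in M ⊗_N M. -/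
open scoped TensorProduct

/-
The proof runs entirely on nondegeneracy of `ψ`: by the quasibasis identities an element `x` is
determined by the values `ψ (x * m)`, and also by the values `ψ (m * x)`. Sliding a centralizing
`c` through the dual-basis expansion of `m` gives `ψ (m * c) = ψ (ν c * m)`, and every algebraic
property of `ν` (centralizing, `ν 1 = 1`, multiplicativity, the inverse
`ν⁻¹ c = ∑ i, u i * ψ (c * v i)`) is then checked after pairing with `ψ`.
-/

namespace Frob

variable {N M : Type*} [Ring N] [Ring M] {ι : N →+* M}

lemma mul_mem_centralizer {c c' : M} (hc : c ∈ centralizer ι) (hc' : c' ∈ centralizer ι) :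
    c * c' ∈ centralizer ι := fun n => by
  rw [mul_assoc, hc' n, ← mul_assoc, hc n, mul_assoc]

namespace FrobeniusData

variable (D : FrobeniusData ι)

lemma eq_of_forall_psi_mul_left {x y : M} (h : ∀ m, D.ψ (x * m) = D.ψ (y * m)) : x = y := by
  rw [← D.quasi_left x, ← D.quasi_left y]
  simp_rw [h]

lemma eq_of_forall_psi_mul_right {x y : M} (h : ∀ m, D.ψ (m * x) = D.ψ (m * y)) : x = y := by
  rw [← D.quasi_right x, ← D.quasi_right y]
  simp_rw [h]

end FrobeniusData

noncomputable def nakayamaInv (D : FrobeniusData ι) (c : M) : M :=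
  ∑ i, D.u i * ι (D.ψ (c * D.v i))

variable (D : FrobeniusData ι) {c : M}

theorem psi_mul_eq_psi_nakayama_mul (hc : c ∈ centralizer ι) (m : M) :
    D.ψ (m * c) = D.ψ (nakayama D c * m) := by
  calc D.ψ (m * c)
      = D.ψ ((∑ i, D.u i * ι (D.ψ (D.v i * m))) * c) := by rw [D.quasi_right]
    _ = ∑ i, D.ψ (D.u i * c) * D.ψ (D.v i * m) := by
        rw [Finset.sum_mul, map_sum]
        refine Finset.sum_congr rfl fun i _ => ?_
        rw [mul_assoc, ← hc, ← mul_assoc, D.ψ_right]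
    _ = D.ψ (nakayama D c * m) := by
        simp_rw [nakayama, Finset.sum_mul, map_sum, mul_assoc, D.ψ_left]

theorem psi_mul_eq_psi_mul_nakayamaInv (hc : c ∈ centralizer ι) (m : M) :
    D.ψ (c * m) = D.ψ (m * nakayamaInv D c) := by
  calc D.ψ (c * m)
      = D.ψ (c * ∑ i, ι (D.ψ (m * D.u i)) * D.v i) := by rw [D.quasi_left]
    _ = ∑ i, D.ψ (m * D.u i) * D.ψ (c * D.v i) := by
        rw [Finset.mul_sum, map_sum]
        refine Finset.sum_congr rfl fun i _ => ?_
        rw [← mul_assoc, hc, mul_assoc, D.ψ_left]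
    _ = D.ψ (m * nakayamaInv D c) := by
        simp_rw [nakayamaInv, Finset.mul_sum, map_sum, ← mul_assoc, D.ψ_right]

theorem nakayama_mem_centralizer (hc : c ∈ centralizer ι) : nakayama D c ∈ centralizer ι := by
  intro n
  refine D.eq_of_forall_psi_mul_left fun m => ?_
  rw [mul_assoc, ← psi_mul_eq_psi_nakayama_mul D hc, mul_assoc, D.ψ_left,
    psi_mul_eq_psi_nakayama_mul D hc, ← D.ψ_left, mul_assoc]

theorem nakayamaInv_mem_centralizer (hc : c ∈ centralizer ι) :
    nakayamaInv D c ∈ centralizer ι := by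
  intro n
  refine D.eq_of_forall_psi_mul_right fun m => ?_
  rw [← mul_assoc, D.ψ_right, ← psi_mul_eq_psi_mul_nakayamaInv D hc, ← D.ψ_right, mul_assoc,
    psi_mul_eq_psi_mul_nakayamaInv D hc, ← mul_assoc]

theorem nakayama_one : nakayama D 1 = 1 := by
  simpa only [nakayama, mul_one, one_mul] using D.quasi_left 1

theorem nakayama_mul {c' : M} (hc : c ∈ centralizer ι) (hc' : c' ∈ centralizer ι) :
    nakayama D (c * c') = nakayama D c * nakayama D c' := by
  refine D.eq_of_forall_psi_mul_left fun m => ?_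
  rw [← psi_mul_eq_psi_nakayama_mul D (mul_mem_centralizer hc hc'), ← mul_assoc,
    psi_mul_eq_psi_nakayama_mul D hc', ← mul_assoc, psi_mul_eq_psi_nakayama_mul D hc, mul_assoc]

theorem nakayama_nakayamaInv (hc : c ∈ centralizer ι) : nakayama D (nakayamaInv D c) = c :=
  D.eq_of_forall_psi_mul_left fun m => by
    rw [← psi_mul_eq_psi_nakayama_mul D (nakayamaInv_mem_centralizer D hc),
      ← psi_mul_eq_psi_mul_nakayamaInv D hc]

theorem nakayamaInv_nakayama (hc : c ∈ centralizer ι) : nakayamaInv D (nakayama D c) = c :=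
  D.eq_of_forall_psi_mul_right fun m => by
    rw [← psi_mul_eq_psi_mul_nakayamaInv D (nakayama_mem_centralizer D hc),
      ← psi_mul_eq_psi_nakayama_mul D hc]

theorem nakayama_mul_eq_sum (hc : c ∈ centralizer ι) (x : M) :
    nakayama D c * x = ∑ i, ι (D.ψ (x * (D.u i * c))) * D.v i := by
  conv_lhs => rw [← D.quasi_left (nakayama D c * x)]
  simp_rw [mul_assoc, ← psi_mul_eq_psi_nakayama_mul D hc, mul_assoc]

lemma mul_tmul_sub_tmul_mul_mem_relN (a b : M) (n : N) :
    (a * ι n) ⊗ₜ[ℤ] b - a ⊗ₜ[ℤ] (ι n * b) ∈ relN ι :=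
  Submodule.subset_span ⟨n, a, b, rfl⟩

/-- Both sides expand, via `quasi_right` on `u i * c` and `nakayama_mul_eq_sum` on `ν c * v j`,
into the same double sum with the scalar `ψ (v j * (u i * c))` on opposite sides of `⊗`. -/
theorem sum_mul_tmul_sub_sum_tmul_nakayama_mul_mem_relN (hc : c ∈ centralizer ι) :
    (∑ i, (D.u i * c) ⊗ₜ[ℤ] D.v i) - (∑ i, D.u i ⊗ₜ[ℤ] (nakayama D c * D.v i)) ∈ relN ι := by
  set t : Fin D.k → Fin D.k → N := fun i j => D.ψ (D.v j * (D.u i * c))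
  have hleft : ∑ i, (D.u i * c) ⊗ₜ[ℤ] D.v i = ∑ i, ∑ j, (D.u j * ι (t i j)) ⊗ₜ[ℤ] D.v i := by
    simp_rw [t, ← TensorProduct.sum_tmul, D.quasi_right]
  have hright : ∑ j, D.u j ⊗ₜ[ℤ] (nakayama D c * D.v j)
      = ∑ i, ∑ j, D.u j ⊗ₜ[ℤ] (ι (t i j) * D.v i) := by
    rw [Finset.sum_comm]
    simp_rw [t, ← TensorProduct.tmul_sum, nakayama_mul_eq_sum D hc]
  rw [hleft, hright, ← Finset.sum_sub_distrib]
  refine Submodule.sum_mem _ fun i _ => ?_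
  rw [← Finset.sum_sub_distrib]
  exact Submodule.sum_mem _ fun j _ => mul_tmul_sub_tmul_mul_mem_relN _ _ _

end Frob

/-- The Nakayama map `ν(c) = ∑ i, ψ(u i * c) * v i` is a ring automorphism
of the centralizer `C_M(N)`, and satisfies `ψ(m c) = ψ(ν(c) m)` and
`∑ i, u i c ⊗ v i = ∑ i, u i ⊗ ν(c) v i` in `M ⊗_N M`. -/
theorem statement2 {N M : Type*} [Ring N] [Ring M] (ι : N →+* M)
    (D : Frob.FrobeniusData ι) :
    (∀ c ∈ Frob.centralizer ι, Frob.nakayama D c ∈ Frob.centralizer ι) ∧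
    Frob.nakayama D 1 = 1 ∧
    (∀ c ∈ Frob.centralizer ι, ∀ c' ∈ Frob.centralizer ι,
      Frob.nakayama D (c * c') = Frob.nakayama D c * Frob.nakayama D c') ∧
    (∃ ν' : M → M, ∀ c ∈ Frob.centralizer ι,
      ν' c ∈ Frob.centralizer ι ∧ Frob.nakayama D (ν' c) = c ∧ ν' (Frob.nakayama D c) = c) ∧
    (∀ (m : M), ∀ c ∈ Frob.centralizer ι, D.ψ (m * c) = D.ψ (Frob.nakayama D c * m)) ∧
    (∀ c ∈ Frob.centralizer ι,
      (∑ i, (D.u i * c) ⊗ₜ[ℤ] D.v i) - (∑ i, D.u i ⊗ₜ[ℤ] (Frob.nakayama D c * D.v i))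
        ∈ Frob.relN ι) := by
  open Frob in
  exact ⟨fun c hc => nakayama_mem_centralizer D hc,
    nakayama_one D,
    fun c hc c' hc' => nakayama_mul D hc hc',
    ⟨nakayamaInv D, fun c hc => ⟨nakayamaInv_mem_centralizer D hc,
      nakayama_nakayamaInv D hc, nakayamaInv_nakayama D hc⟩⟩,
    fun m c hc => psi_mul_eq_psi_nakayama_mul D hc m,
    fun c hc => sum_mul_tmul_sub_sum_tmul_nakayama_mul_mem_relN D hc⟩
end

section
/- Let N ⊆ M be a Frobenius extension with Frobenius structure (ψ, Σᵢ uᵢ ⊗ vᵢ), and let βᵢ, γᵢ ∈ End(_N M_N) and bᵢ, cᵢ ∈ (M ⊗_N M)^N be related by bᵢ = Σⱼ uⱼ ⊗ γᵢ(vⱼ) and cᵢ = Σⱼ βᵢ(uⱼ) ⊗ vⱼ. Then the following are equivalent: (i) Σᵢ bᵢ¹ ⊗ bᵢ² βᵢ(m) = m ⊗ 1 in M ⊗_N M for all m; (ii) Σᵢ γᵢ(m) cᵢ¹ ⊗ cᵢ² = 1 ⊗ m in M ⊗_N M for all m; (iii) Σᵢ γᵢ(m) βᵢ(m') = ψ(m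 m') for all m, m' ∈ M; (iv) Σᵢ bᵢ¹ ⊗ bᵢ² cᵢ¹ ⊗ cᵢ² = Σₖ uₖ ⊗ 1 ⊗ vₖ in M ⊗_N M ⊗_N M. -/
open scoped TensorProduct

namespace Frob
variable {N M : Type*} [Ring N] [Ring M] {ι : N →+* M}

/-- `F⁻¹(x)` as an additive endomorphism of `M`. -/
noncomputable def FinvHom (D : FrobeniusData ι) (x : M ⊗[ℤ] M) : M →+ M :=
  AddMonoidHom.mk' (fun m => FinvEval D x m) (by
    intro a b
    induction x using TensorProduct.induction_on with
    | zero => simp [FinvEval]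
    | tmul p q => simp [FinvEval, add_mul, map_add]
    | add u v hu hv =>
        simp only [FinvEval, map_add] at hu hv ⊢
        rw [hu, hv]; abel)
end Frob

/-!
Over a Frobenius extension an element `x` of `M ⊗_N M` is determined by its contractions
`m ↦ ψ(m x¹) x²`, because `x = ∑ⱼ uⱼ ⊗ ψ(vⱼ x¹) x²` in `M ⊗_N M`; symmetrically by
`m ↦ x¹ ψ(x² m)`, and an element of `M ⊗_N M ⊗_N M` by `(m, m') ↦ ψ(m x¹) x² ψ(x³ m')`.
Contracting (i), (ii) and (iv) in these ways and summing against the quasibasis, using the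
`N`-linearity of `γᵢ` and `βᵢ`, turns each of them into (iii).
-/

namespace Frob

variable {N M : Type*} [Ring N] [Ring M] {ι : N →+* M}

open TensorProduct

lemma relN_le_ker {A : Type*} [AddCommGroup A] (f : M ⊗[ℤ] M →ₗ[ℤ] A)
    (hf : ∀ (n : N) (a b : M), f ((a * ι n) ⊗ₜ b) = f (a ⊗ₜ (ι n * b))) :
    relN ι ≤ LinearMap.ker f :=
  Submodule.span_le.2 <| by
    rintro _ ⟨n, a, b, rfl⟩
    simp [hf]

lemma relN3_le_ker {A : Type*} [AddCommGroup A] (f : M ⊗[ℤ] (M ⊗[ℤ] M) →ₗ[ℤ] A)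
    (hf₁ : ∀ (n : N) (a b c : M), f ((a * ι n) ⊗ₜ (b ⊗ₜ c)) = f (a ⊗ₜ ((ι n * b) ⊗ₜ c)))
    (hf₂ : ∀ (n : N) (a b c : M), f (a ⊗ₜ ((b * ι n) ⊗ₜ c)) = f (a ⊗ₜ (b ⊗ₜ (ι n * c)))) :
    relN3 ι ≤ LinearMap.ker f :=
  Submodule.span_le.2 <| by
    rintro _ (⟨n, a, b, c, rfl⟩ | ⟨n, a, b, c, rfl⟩) <;> simp [hf₁, hf₂]

lemma tmul_balance_mem_relN (n : N) (a b : M) :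
    (a * ι n) ⊗ₜ[ℤ] b - a ⊗ₜ[ℤ] (ι n * b) ∈ relN ι :=
  Submodule.subset_span ⟨n, a, b, rfl⟩

lemma tmul_tmul_balance_mem_relN3 (n n' : N) (a b c : M) :
    (a * ι n) ⊗ₜ[ℤ] (b ⊗ₜ[ℤ] (ι n' * c)) - a ⊗ₜ[ℤ] ((ι n * b * ι n') ⊗ₜ[ℤ] c) ∈ relN3 ι := by
  have h₁ : (a * ι n) ⊗ₜ[ℤ] (b ⊗ₜ[ℤ] (ι n' * c)) - a ⊗ₜ[ℤ] ((ι n * b) ⊗ₜ[ℤ] (ι n' * c))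
      ∈ relN3 ι := Submodule.subset_span (Or.inl ⟨n, a, b, ι n' * c, rfl⟩)
  have h₂ : a ⊗ₜ[ℤ] ((ι n * b * ι n') ⊗ₜ[ℤ] c) - a ⊗ₜ[ℤ] ((ι n * b) ⊗ₜ[ℤ] (ι n' * c))
      ∈ relN3 ι := Submodule.subset_span (Or.inr ⟨n', a, ι n * b, c, rfl⟩)
  simpa using sub_mem h₁ h₂

namespace FrobeniusData

variable (D : FrobeniusData ι)

lemma sum_ψ_mul_map_v {α : M →+ M} (hα : ∀ n m, α (ι n * m) = ι n * α m) (m : M) :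
    ∑ j, ι (D.ψ (m * D.u j)) * α (D.v j) = α m := by
  simp_rw [← hα, ← map_sum, D.quasi_left]

lemma sum_map_u_mul_ψ {α : M →+ M} (hα : ∀ m n, α (m * ι n) = α m * ι n) (m : M) :
    ∑ j, α (D.u j) * ι (D.ψ (D.v j * m)) = α m := by
  simp_rw [← hα, ← map_sum, D.quasi_right]

-- `D.contractLeft m x` is `FinvEval D x m` by definition.
noncomputable def contractLeft (m : M) : M ⊗[ℤ] M →ₗ[ℤ] M :=
  LinearMap.mul' ℤ M ∘ₗ
    (ι.toAddMonoidHom.comp (D.ψ.comp (AddMonoidHom.mulLeft m))).toIntLinearMap.rTensor M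

noncomputable def contractRight (m : M) : M ⊗[ℤ] M →ₗ[ℤ] M :=
  LinearMap.mul' ℤ M ∘ₗ
    (ι.toAddMonoidHom.comp (D.ψ.comp (AddMonoidHom.mulRight m))).toIntLinearMap.lTensor M

noncomputable def contractOuter (m m' : M) : M ⊗[ℤ] (M ⊗[ℤ] M) →ₗ[ℤ] M :=
  D.contractLeft m ∘ₗ (D.contractRight m').lTensor M

@[simp] lemma contractLeft_tmul (m a b : M) :
    D.contractLeft m (a ⊗ₜ b) = ι (D.ψ (m * a)) * b := rfl

@[simp] lemma contractRight_tmul (m a b : M) :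
    D.contractRight m (a ⊗ₜ b) = a * ι (D.ψ (b * m)) := rfl

@[simp] lemma contractOuter_tmul (m m' a b c : M) :
    D.contractOuter m m' (a ⊗ₜ (b ⊗ₜ c)) = ι (D.ψ (m * a)) * (b * ι (D.ψ (c * m'))) := rfl

lemma relN_le_ker_contractLeft (m : M) : relN ι ≤ LinearMap.ker (D.contractLeft m) :=
  relN_le_ker _ fun n a b => by
    rw [contractLeft_tmul, contractLeft_tmul, ← mul_assoc, D.ψ_right, ι.map_mul, mul_assoc]

lemma relN_le_ker_contractRight (m : M) : relN ι ≤ LinearMap.ker (D.contractRight m) :=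
  relN_le_ker _ fun n a b => by
    rw [contractRight_tmul, contractRight_tmul, mul_assoc (ι n), D.ψ_left, ι.map_mul, mul_assoc]

lemma relN3_le_ker_contractOuter (m m' : M) : relN3 ι ≤ LinearMap.ker (D.contractOuter m m') :=
  relN3_le_ker _
    (fun n a b c => by
      simp only [contractOuter_tmul]
      rw [← mul_assoc m a, D.ψ_right, ι.map_mul, mul_assoc, mul_assoc (ι n)])
    (fun n a b c => by
      simp only [contractOuter_tmul]
      rw [mul_assoc (ι n) c, D.ψ_left, ι.map_mul, mul_assoc b])

lemma sub_sum_tmul_contractLeft_mem_relN (x : M ⊗[ℤ] M) :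
    x - ∑ j, D.u j ⊗ₜ[ℤ] D.contractLeft (D.v j) x ∈ relN ι := by
  induction x using TensorProduct.induction_on with
  | zero => simp
  | tmul a b =>
    simp only [contractLeft_tmul]
    nth_rw 1 [← D.quasi_right a]
    rw [sum_tmul, ← Finset.sum_sub_distrib]
    exact Submodule.sum_mem _ fun j _ => tmul_balance_mem_relN _ _ _
  | add x y hx hy =>
    convert add_mem hx hy using 1
    simp only [map_add, tmul_add, Finset.sum_add_distrib]
    abel

lemma sub_sum_contractRight_tmul_mem_relN (x : M ⊗[ℤ] M) :
    x - ∑ p, D.contractRight (D.u p) x ⊗ₜ[ℤ] D.v p ∈ relN ι := by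
  induction x using TensorProduct.induction_on with
  | zero => simp
  | tmul a b =>
    simp only [contractRight_tmul]
    nth_rw 1 [← D.quasi_left b]
    rw [tmul_sum, ← Finset.sum_sub_distrib]
    exact Submodule.sum_mem _ fun p _ => by
      simpa using Submodule.neg_mem _ (tmul_balance_mem_relN (D.ψ (b * D.u p)) a (D.v p))
  | add x y hx hy =>
    convert add_mem hx hy using 1
    simp only [map_add, add_tmul, Finset.sum_add_distrib]
    abel

lemma sub_sum_tmul_contractOuter_tmul_mem_relN3 (x : M ⊗[ℤ] (M ⊗[ℤ] M)) :
    x - ∑ j, ∑ p, D.u j ⊗ₜ[ℤ] (D.contractOuter (D.v j) (D.u p) x ⊗ₜ[ℤ] D.v p) ∈ relN3 ι := by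
  induction x using TensorProduct.induction_on with
  | zero => simp
  | tmul a y =>
    induction y using TensorProduct.induction_on with
    | zero => simp
    | tmul b c =>
      simp only [contractOuter_tmul]
      nth_rw 1 [← D.quasi_right a, ← D.quasi_left c]
      simp only [sum_tmul, tmul_sum]
      rw [Finset.sum_comm, ← Finset.sum_sub_distrib]
      refine Submodule.sum_mem _ fun j _ => ?_
      rw [← Finset.sum_sub_distrib]
      refine Submodule.sum_mem _ fun p _ => ?_
      simpa only [mul_assoc] using
        tmul_tmul_balance_mem_relN3 (D.ψ (D.v j * a)) (D.ψ (c * D.u p)) (D.u j) b (D.v p)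
    | add y z hy hz =>
      convert add_mem hy hz using 1
      simp only [tmul_add, map_add, add_tmul, Finset.sum_add_distrib]
      abel
  | add x y hx hy =>
    convert add_mem hx hy using 1
    simp only [map_add, add_tmul, tmul_add, Finset.sum_add_distrib]
    abel

lemma mem_relN_iff_contractLeft {x : M ⊗[ℤ] M} :
    x ∈ relN ι ↔ ∀ m, D.contractLeft m x = 0 := by
  refine ⟨fun hx m => D.relN_le_ker_contractLeft m hx, fun h => ?_⟩
  simpa [h] using D.sub_sum_tmul_contractLeft_mem_relN x

lemma mem_relN_iff_contractRight {x : M ⊗[ℤ] M} :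
    x ∈ relN ι ↔ ∀ m, D.contractRight m x = 0 := by
  refine ⟨fun hx m => D.relN_le_ker_contractRight m hx, fun h => ?_⟩
  simpa [h] using D.sub_sum_contractRight_tmul_mem_relN x

lemma mem_relN3_iff_contractOuter {x : M ⊗[ℤ] (M ⊗[ℤ] M)} :
    x ∈ relN3 ι ↔ ∀ m m', D.contractOuter m m' x = 0 := by
  refine ⟨fun hx m m' => D.relN3_le_ker_contractOuter m m' hx, fun h => ?_⟩
  simpa [h] using D.sub_sum_tmul_contractOuter_tmul_mem_relN3 x

section Conditions

variable {k : ℕ} (β γ : Fin k → (M →+ M))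

lemma contractLeft_sum_tmul (hγ : ∀ i n m, γ i (ι n * m) = ι n * γ i m) (m m' : M) :
    D.contractLeft m (∑ i, ∑ j, D.u j ⊗ₜ[ℤ] (γ i (D.v j) * β i m')) = ∑ i, γ i m * β i m' := by
  simp only [map_sum, contractLeft_tmul, ← mul_assoc, ← Finset.sum_mul,
    D.sum_ψ_mul_map_v (hγ _)]

lemma contractRight_sum_tmul (hβ : ∀ i m n, β i (m * ι n) = β i m * ι n) (m m' : M) :
    D.contractRight m' (∑ i, ∑ j, (γ i m * β i (D.u j)) ⊗ₜ[ℤ] D.v j) = ∑ i, γ i m * β i m' := by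
  simp only [map_sum, contractRight_tmul, mul_assoc, ← Finset.mul_sum,
    D.sum_map_u_mul_ψ (hβ _)]

lemma contractOuter_sum_tmul_tmul (hβ : ∀ i m n, β i (m * ι n) = β i m * ι n)
    (hγ : ∀ i n m, γ i (ι n * m) = ι n * γ i m) (m m' : M) :
    D.contractOuter m m'
        (∑ i, ∑ j, ∑ p, D.u j ⊗ₜ[ℤ] ((γ i (D.v j) * β i (D.u p)) ⊗ₜ[ℤ] D.v p)) =
      ∑ i, γ i m * β i m' := by
  simp only [map_sum, contractOuter_tmul, mul_assoc, ← Finset.mul_sum,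
    D.sum_map_u_mul_ψ (hβ _)]
  simp only [← mul_assoc, ← Finset.sum_mul, D.sum_ψ_mul_map_v (hγ _)]

lemma contractOuter_sum_tmul_one_tmul (m m' : M) :
    D.contractOuter m m' (∑ p, D.u p ⊗ₜ[ℤ] ((1 : M) ⊗ₜ[ℤ] D.v p)) = ι (D.ψ (m * m')) := by
  simp only [map_sum, contractOuter_tmul, one_mul, ← map_mul, ← D.ψ_right, mul_assoc]
  rw [← map_sum, ← map_sum, ← Finset.mul_sum, D.quasi_right]

theorem sum_tmul_sub_tmul_one_mem_relN_iff (hγ : ∀ i n m, γ i (ι n * m) = ι n * γ i m) :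
    (∀ m : M, (∑ i, ∑ j, D.u j ⊗ₜ[ℤ] (γ i (D.v j) * β i m)) - m ⊗ₜ[ℤ] (1 : M) ∈ relN ι) ↔
      ∀ m m' : M, ∑ i, γ i m * β i m' = ι (D.ψ (m * m')) := by
  simp only [D.mem_relN_iff_contractLeft, map_sub, D.contractLeft_sum_tmul β γ hγ,
    contractLeft_tmul, mul_one, sub_eq_zero]
  exact forall_comm

theorem sum_tmul_sub_one_tmul_mem_relN_iff (hβ : ∀ i m n, β i (m * ι n) = β i m * ι n) :
    (∀ m : M, (∑ i, ∑ j, (γ i m * β i (D.u j)) ⊗ₜ[ℤ] D.v j) - (1 : M) ⊗ₜ[ℤ] m ∈ relN ι) ↔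
      ∀ m m' : M, ∑ i, γ i m * β i m' = ι (D.ψ (m * m')) := by
  simp only [D.mem_relN_iff_contractRight, map_sub, D.contractRight_sum_tmul β γ hβ,
    contractRight_tmul, one_mul, sub_eq_zero]

theorem sum_tmul_tmul_sub_mem_relN3_iff (hβ : ∀ i m n, β i (m * ι n) = β i m * ι n)
    (hγ : ∀ i n m, γ i (ι n * m) = ι n * γ i m) :
    (∑ i, ∑ j, ∑ p, D.u j ⊗ₜ[ℤ] ((γ i (D.v j) * β i (D.u p)) ⊗ₜ[ℤ] D.v p))
        - (∑ p, D.u p ⊗ₜ[ℤ] ((1 : M) ⊗ₜ[ℤ] D.v p)) ∈ relN3 ι ↔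
      ∀ m m' : M, ∑ i, γ i m * β i m' = ι (D.ψ (m * m')) := by
  simp only [D.mem_relN3_iff_contractOuter, map_sub, D.contractOuter_sum_tmul_tmul β γ hβ hγ,
    D.contractOuter_sum_tmul_one_tmul, sub_eq_zero]

end Conditions

end FrobeniusData

end Frob

/-- (Lemma 3.1 of Böhm–Szlachányi.)  For a Frobenius extension with
Frobenius structure `(ψ, ∑ i, u i ⊗ v i)` and families `β i, γ i ∈ End(_N M _N)` with
`b i = ∑ j, u j ⊗ γ i (v j)` and `c i = ∑ j, β i (u j) ⊗ v j`, the four depth-2 conditions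
(i)–(iv) are equivalent. -/
theorem statement4 {N M : Type*} [Ring N] [Ring M] (ι : N →+* M)
    (D : Frob.FrobeniusData ι) (n : ℕ) (β γ : Fin n → (M →+ M))
    (hβ : ∀ i, Frob.IsBimodEnd ι (β i)) (hγ : ∀ i, Frob.IsBimodEnd ι (γ i)) :
    -- (i) ∑ i, b i¹ ⊗ b i² β i (m) = m ⊗ 1
    ((∀ m : M,
        (∑ i, ∑ j, D.u j ⊗ₜ[ℤ] (γ i (D.v j) * β i m)) - m ⊗ₜ[ℤ] (1 : M) ∈ Frob.relN ι) ↔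
    -- (ii) ∑ i, γ i (m) c i¹ ⊗ c i² = 1 ⊗ m
     (∀ m : M,
        (∑ i, ∑ j, (γ i m * β i (D.u j)) ⊗ₜ[ℤ] D.v j) - (1 : M) ⊗ₜ[ℤ] m ∈ Frob.relN ι)) ∧
    ((∀ m : M,
        (∑ i, ∑ j, D.u j ⊗ₜ[ℤ] (γ i (D.v j) * β i m)) - m ⊗ₜ[ℤ] (1 : M) ∈ Frob.relN ι) ↔
    -- (iii) ∑ i, γ i (m) * β i (m') = ψ (m m')
     (∀ m m' : M, ∑ i, γ i m * β i m' = ι (D.ψ (m * m')))) ∧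
    ((∀ m : M,
        (∑ i, ∑ j, D.u j ⊗ₜ[ℤ] (γ i (D.v j) * β i m)) - m ⊗ₜ[ℤ] (1 : M) ∈ Frob.relN ι) ↔
    -- (iv) ∑ i, b i¹ ⊗ b i² c i¹ ⊗ c i² = ∑ p, u p ⊗ 1 ⊗ v p
     ((∑ i, ∑ j, ∑ p, D.u j ⊗ₜ[ℤ] ((γ i (D.v j) * β i (D.u p)) ⊗ₜ[ℤ] D.v p))
        - (∑ p, D.u p ⊗ₜ[ℤ] ((1 : M) ⊗ₜ[ℤ] D.v p)) ∈ Frob.relN3 ι)) := by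
  have hi := D.sum_tmul_sub_tmul_one_mem_relN_iff β γ fun i => (hγ i).1
  have hii := D.sum_tmul_sub_one_tmul_mem_relN_iff β γ fun i => (hβ i).2
  have hiv := D.sum_tmul_tmul_sub_mem_relN3_iff β γ (fun i => (hβ i).2) fun i => (hγ i).1
  exact ⟨hi.trans hii.symm, hi, hi.trans hiv.symm⟩
end
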